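/- The function φ(t) = Re( r(t)⁻¹ · g(r(t)) ), where r(t) = 1/(3 - 2e^{it}) and g(z) = (1 - √(1 - z²))/z (principal branch of the square root), satisfies φ(0) = 1 and |φ(t)| < 1 for t ∈ (0, 2π). -/

import Mathlib

open Real

/-- `r(t) = (3 - 2e^{it})⁻¹`. -/
noncomputable def rC (t : ℝ) : ℂ := (3 - 2 * Complex.exp (Complex.I * t))⁻¹

/-- `g(z) = (1 - √(1 - z²))/z` with the principal branch of the square root. -/
noncomputable def gC (z : ℂ) : ℂ := (1 - (1 - z ^ 2) ^ ((1 : ℂ) / 2)) / z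

/-- `φ(t) = Re(r(t)⁻¹ · g(r(t)))`. -/
noncomputable def phiR (t : ℝ) : ℝ := ((rC t)⁻¹ * gC (rC t)).re

/-- For `z` with nonnegative real part, the principal square root `z^(1/2)`
satisfies `|Im| ≤ Re`. -/
lemma sqrt_re_ge_abs_im {z : ℂ} (hz : z ≠ 0) (hre : 0 ≤ z.re) :
    |(z ^ ((1:ℂ)/2)).im| ≤ (z ^ ((1:ℂ)/2)).re := by
  rw [Complex.cpow_def_of_ne_zero hz]
  have harg : |Complex.arg z| ≤ π / 2 := Complex.abs_arg_le_pi_div_two_iff.2 hre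
  have him : (Complex.log z * (1/2)).im = Complex.arg z / 2 := by
    simp [Complex.mul_im, Complex.log_im]
    ring
  rw [Complex.exp_re, Complex.exp_im, him]
  have hepos : (0:ℝ) < Real.exp ((Complex.log z * (1/2)).re) := Real.exp_pos _
  rw [abs_mul, abs_of_pos hepos]
  have hπ : 0 < π := Real.pi_pos
  have h1 : |Complex.arg z / 2| ≤ π / 4 := by
    rw [abs_div]; simp only [abs_two]
    linarith [abs_nonneg (Complex.arg z)]
  have hc2 : 0 ≤ Real.cos (Complex.arg z) :=
    Real.cos_nonneg_of_mem_Icc ⟨by linarith [abs_le.1 harg |>.1], abs_le.1 harg |>.2⟩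
  have hc : 0 ≤ Real.cos (Complex.arg z / 2) := by
    apply Real.cos_nonneg_of_mem_Icc
    constructor
    · linarith [abs_le.1 h1 |>.1]
    · linarith [abs_le.1 h1 |>.2]
  have hdouble : Real.cos (Complex.arg z) = 2 * Real.cos (Complex.arg z / 2) ^ 2 - 1 := by
    have := Real.cos_two_mul (Complex.arg z / 2)
    rw [show 2 * (Complex.arg z / 2) = Complex.arg z by ring] at this
    exact this
  have hpyth := Real.sin_sq_add_cos_sq (Complex.arg z / 2)
  have hkey : |Real.sin (Complex.arg z / 2)| ≤ Real.cos (Complex.arg z / 2) := by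
    nlinarith [sq_abs (Real.sin (Complex.arg z / 2)), abs_nonneg (Real.sin (Complex.arg z / 2))]
  nlinarith

/-- `φ(0) = 1` and `|φ(t)| < 1` for `t ∈ (0, 2π)`. -/
theorem phiR_properties :
    phiR 0 = 1 ∧ ∀ t : ℝ, 0 < t → t < 2 * π → |phiR t| < 1 := by
  constructor
  · have h0 : rC 0 = 1 := by
      simp [rC]
      norm_num
    rw [phiR, h0]
    simp [gC, Complex.zero_cpow (by norm_num : ((1:ℂ)/2) ≠ 0)]
  · intro t ht ht2
    -- basic real facts
    have hπ := Real.pi_pos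
    have hcos1 : Real.cos t < 1 := by
      rcases lt_or_eq_of_le (Real.cos_le_one t) with h | h
      · exact h
      · exfalso
        have := (Real.cos_eq_one_iff_of_lt_of_lt (by linarith) ht2).1 h
        linarith
    set c := Real.cos t with hc
    set sn := Real.sin t with hsn
    have hpyth : sn ^ 2 + c ^ 2 = 1 := Real.sin_sq_add_cos_sq t
    -- the complex number w = 3 - 2 e^{it}
    set w : ℂ := 3 - 2 * Complex.exp (Complex.I * t) with hw
    have hexp : Complex.exp (Complex.I * t) = Complex.cos t + Complex.sin t * Complex.I := by
      rw [mul_comm Complex.I (t:ℂ)]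
      exact Complex.exp_mul_I (t : ℂ)
    have hwre : w.re = 3 - 2 * c := by
      rw [hw, hexp]
      simp [Complex.cos_ofReal_re, Complex.sin_ofReal_im, hc]
    have hwim : w.im = -(2 * sn) := by
      rw [hw, hexp]
      simp [Complex.cos_ofReal_im, Complex.sin_ofReal_re, hsn]
    have hwre_gt : 1 < w.re := by rw [hwre]; linarith
    have hw0 : w ≠ 0 := by
      intro h
      rw [h] at hwre_gt
      norm_num at hwre_gt
    have hrc : rC t = w⁻¹ := rfl
    -- |w| > 1
    have hnormsq : Complex.normSq w = 13 - 12 * c := by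
      rw [Complex.normSq_apply, hwre, hwim]; nlinarith
    have hnorm1 : 1 < Complex.normSq w := by rw [hnormsq]; nlinarith [Real.neg_one_le_cos t]
    have habsw : 1 < ‖w‖ := by
      have := Complex.sq_norm w
      nlinarith [norm_nonneg w]
    -- base = 1 - (w⁻¹)^2 has positive real part
    set base : ℂ := 1 - (w⁻¹) ^ 2 with hbase
    have habs_inv_sq : ‖(w⁻¹) ^ 2‖ < 1 := by
      rw [norm_pow, norm_inv, inv_pow]
      apply inv_lt_one_of_one_lt₀
      nlinarith
    have hbase_re : 0 < base.re := by
      have : ((w⁻¹) ^ 2).re ≤ ‖(w⁻¹) ^ 2‖ := Complex.re_le_norm _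
      simp only [hbase, Complex.sub_re, Complex.one_re]
      linarith
    have hbase0 : base ≠ 0 := by
      intro h
      rw [h] at hbase_re
      norm_num at hbase_re
    -- s = sqrt(base)
    set s : ℂ := base ^ ((1:ℂ)/2) with hs
    have hs_sq : s * s = base := by
      rw [hs, ← Complex.cpow_add _ _ hbase0]
      norm_num
    have hs_re : |s.im| ≤ s.re := sqrt_re_ge_abs_im hbase0 (le_of_lt hbase_re)
    -- v = w * s, u = w - v
    set v : ℂ := w * s with hv
    set u : ℂ := w - v with hu
    -- Re v ≥ 0
    have hwim_le : |w.im| ≤ w.re := by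
      rw [hwre, hwim, abs_neg]
      have h2 : |2 * sn| = 2 * |sn| := by rw [abs_mul]; norm_num
      rw [h2]
      nlinarith [sq_abs sn, abs_nonneg sn, sq_nonneg (4 * c - 3)]
    have hvre : 0 ≤ v.re := by
      rw [hv, Complex.mul_re]
      have h1 : w.im * s.im ≤ |w.im| * |s.im| := by
        calc w.im * s.im ≤ |w.im * s.im| := le_abs_self _
          _ = |w.im| * |s.im| := abs_mul _ _
      have h2 : |w.im| * |s.im| ≤ w.re * s.re := by
        apply mul_le_mul hwim_le hs_re (abs_nonneg _)
        linarith [abs_nonneg s.im]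
      linarith
    -- Re (w + v) > 1, hence |w + v| > 1
    have hwv_re : 1 < (w + v).re := by
      rw [Complex.add_re]; linarith
    have hwv_abs : 1 < ‖w + v‖ := by
      calc 1 < (w + v).re := hwv_re
        _ ≤ ‖w + v‖ := Complex.re_le_norm _
    -- u * (w + v) = 1
    have hv_sq : v * v = w ^ 2 - 1 := by
      have h1 : w ^ 2 * (1 - w⁻¹ ^ 2) = w ^ 2 - 1 := by
        rw [mul_sub, mul_one, ← mul_pow, mul_inv_cancel₀ hw0, one_pow]
      calc v * v = w ^ 2 * (s * s) := by rw [hv]; ring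
        _ = w ^ 2 * (1 - w⁻¹ ^ 2) := by rw [hs_sq, hbase]
        _ = w ^ 2 - 1 := h1
    have hkey : u * (w + v) = 1 := by
      have h3 : (w - v) * (w + v) = w ^ 2 - v * v := by ring
      rw [hu, h3, hv_sq]; ring
    -- |u| < 1
    have hu_abs : ‖u‖ < 1 := by
      have h1 : ‖u‖ * ‖w + v‖ = 1 := by
        rw [← norm_mul, hkey, norm_one]
      nlinarith [norm_nonneg u]
    -- 2 * (w * u) = u^2 + 1
    have hq : 2 * (w * u) = u ^ 2 + 1 := by
      have h4 : u * (w + v) = u * (2 * w - u) := by rw [hu]; ring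
      rw [h4] at hkey
      linear_combination hkey
    -- phiR t = Re ((u^2+1)/2)
    have hphi : phiR t = ((u ^ 2 + 1) / 2).re := by
      rw [phiR, hrc, inv_inv]
      congr 1
      rw [gC, ← hbase, ← hs, div_eq_mul_inv, inv_inv]
      have h5 : w * ((1 - s) * w) = w * (w - w * s) := by ring
      rw [h5, ← hv, ← hu]
      linear_combination hq / 2
    rw [hphi]
    -- conclude
    have habs2 : ‖(u ^ 2 + 1) / 2‖ < 1 := by
      rw [norm_div]
      have h6 : ‖u ^ 2 + 1‖ ≤ ‖u ^ 2‖ + 1 := by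
        calc ‖u ^ 2 + 1‖ ≤ ‖u ^ 2‖ + ‖(1 : ℂ)‖ :=
              norm_add_le _ _
          _ = ‖u ^ 2‖ + 1 := by rw [norm_one]
      have h7 : ‖u ^ 2‖ < 1 := by
        rw [norm_pow]
        nlinarith [norm_nonneg u]
      have h8 : ‖(2 : ℂ)‖ = 2 := by norm_num
      rw [h8]
      linarith
    calc |((u ^ 2 + 1) / 2).re| ≤ ‖(u ^ 2 + 1) / 2‖ := Complex.abs_re_le_norm _
      _ < 1 := habs2
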